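/- For all integers m ≥ 0, n ≥ 2 and s with 3 ≤ s ≤ n − 1, the K_s-structure connectivity of the DCell network satisfies κ(D_{m,n}; K_s) ≥ ⌈(n−1)/s⌉ + m. -/

import Mathlib

open SimpleGraph

/-! ## Structure connectivity -/

/-- The set of vertices covered by a family of subgraphs of `G`. -/
def SimpleGraph.cutVerts {V : Type*} {G : SimpleGraph V} (F : Finset G.Subgraph) : Set V :=
  ⋃ A ∈ F, A.verts

/-- A family `F` of subgraphs of `G` is a subgraph cut if deleting all vertices of members of `F`
leaves a graph that is disconnected or has at most one vertex. -/
def SimpleGraph.IsSubgraphCut {V : Type*} (G : SimpleGraph V) (F : Finset G.Subgraph) : Prop :=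
  ¬ (G.induce (SimpleGraph.cutVerts F)ᶜ).Connected ∨ ((SimpleGraph.cutVerts F)ᶜ : Set V).Subsingleton

/-- An `H`-structure cut of `G`: a subgraph cut all of whose members are isomorphic to `H`. -/
def SimpleGraph.IsStructureCut {V W : Type*} (G : SimpleGraph V) (H : SimpleGraph W)
    (F : Finset G.Subgraph) : Prop :=
  G.IsSubgraphCut F ∧ ∀ A ∈ F, Nonempty (A.coe ≃g H)

/-- An `H`-substructure cut of `G`: a subgraph cut all of whose members are isomorphic to a
connected subgraph of `H`. -/
def SimpleGraph.IsSubstructureCut {V W : Type*} (G : SimpleGraph V) (H : SimpleGraph W)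
    (F : Finset G.Subgraph) : Prop :=
  G.IsSubgraphCut F ∧ ∀ A ∈ F, ∃ K : H.Subgraph, K.Connected ∧ Nonempty (A.coe ≃g K.coe)

/-- The `H`-structure connectivity `κ(G; H)`. -/
noncomputable def SimpleGraph.structConn {V W : Type*} (G : SimpleGraph V) (H : SimpleGraph W) : ℕ :=
  sInf {k | ∃ F : Finset G.Subgraph, G.IsStructureCut H F ∧ F.card = k}

/-- The `H`-substructure connectivity `κˢ(G; H)`. -/
noncomputable def SimpleGraph.substructConn {V W : Type*} (G : SimpleGraph V) (H : SimpleGraph W) : ℕ :=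
  sInf {k | ∃ F : Finset G.Subgraph, G.IsSubstructureCut H F ∧ F.card = k}

/-- The star `K_{1,t}` with center `0` and `t` leaves. -/
def starGraph (t : ℕ) : SimpleGraph (Fin (t + 1)) :=
  SimpleGraph.fromRel (fun i _ => i = 0)
/-! ## The DCell network -/

/-- `tcell n m` is the number of servers of the `m`-dimensional DCell with `n`-port switches. -/
def tcell (n : ℕ) : ℕ → ℕ
  | 0 => n
  | m + 1 => tcell n m * (tcell n m + 1)

/-- Vertices (labels `x_m x_{m-1} … x_0`) of the `m`-dimensional DCell with `n`-port switches. -/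
def DCellVertex (n : ℕ) : ℕ → Type
  | 0 => Fin n
  | m + 1 => Fin (tcell n m + 1) × DCellVertex n m

/-- The numerical identifier `x_0 + Σ_{j=1}^{m} x_j · t_{j-1,n}` of a vertex of `D_{m,n}`. -/
def DCellCode (n : ℕ) : (m : ℕ) → DCellVertex n m → ℕ
  | 0, x => Fin.val x
  | m + 1, x => DCellCode n m x.2 + (Fin.val x.1) * tcell n m

/-- The `m`-dimensional DCell with `n`-port switches `D_{m,n}`. -/
def DCell (n : ℕ) : (m : ℕ) → SimpleGraph (DCellVertex n m)
  | 0 => (⊤ : SimpleGraph (Fin n))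
  | m + 1 => SimpleGraph.fromRel (fun u v =>
      (u.1 = v.1 ∧ (DCell n m).Adj u.2 v.2) ∨
      ((u.1 : ℕ) < (v.1 : ℕ) ∧ (u.1 : ℕ) = DCellCode n m v.2 ∧
        (v.1 : ℕ) = DCellCode n m u.2 + 1))

/-!
Induct on `m`: deleting fewer than `⌈(n-1)/s⌉ + m` cliques `K_s` from `D_{m,n}` leaves a
connected graph, and counting shows that at least two vertices survive.

Every vertex of `D_{m+1,n}` has exactly one neighbour outside its copy of `D_{m,n}` (its cell), and
two cells are joined by exactly one edge; as `s ≥ 3`, each deleted clique lies in a single cell.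
If all deleted cliques lie in one cell, the other cells are intact and pairwise adjacent, and each
survivor of the damaged cell keeps its outside neighbour. Otherwise each cell contains fewer than
`⌈(n-1)/s⌉ + m` cliques and stays connected by induction, so a disconnection must destroy every
edge between two groups of cells. If one group is a single cell holding `k` deleted cliques, its
at least `t_{m,n} - s k` survivors need distinct deleted cliques outside it; otherwise at least
`2 (t_{m,n} - 1)` vertices must be deleted. Both exceed the budget, because `t_{m,n}` grows much faster than `s (⌈(n-1)/s⌉ + m)`.
-/

namespace SimpleGraph

variable {V : Type*} {G : SimpleGraph V}

theorem preconnected_induce_of_cells {ι : Type*} {W : Set V} (cell : V → ι)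
    (hcell : ∀ u v : W, cell u = cell v → (G.induce W).Reachable u v)
    (hcross : ∀ S : Set ι, (∃ x : W, cell x ∈ S) → (∃ y : W, cell y ∉ S) →
      ∃ u v : W, cell u ∈ S ∧ cell v ∉ S ∧ (G.induce W).Adj u v) :
    (G.induce W).Preconnected := by
  intro x y
  by_contra hxy
  set S := {i | ∃ z : W, cell z = i ∧ (G.induce W).Reachable x z}
  have hS : ∀ z : W, cell z ∈ S → (G.induce W).Reachable x z := by
    rintro z ⟨z', hz', hxz'⟩
    exact hxz'.trans (hcell z' z hz')
  obtain ⟨u, v, hu, hv, huv⟩ := hcross S ⟨x, x, rfl, .rfl⟩ ⟨y, fun hy => hxy (hS y hy)⟩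
  exact hv ⟨v, rfl, (hS u hu).trans huv.reachable⟩

lemma Subgraph.isNClique_of_iso_top {A : G.Subgraph} {s : ℕ}
    (e : A.coe ≃g (⊤ : SimpleGraph (Fin s))) {T : Finset V} (hT : ↑T = A.verts) :
    G.IsNClique s T := by
  have hmem : ∀ {a}, a ∈ T → a ∈ A.verts := fun ha => hT ▸ Finset.mem_coe.mpr ha
  refine ⟨fun a ha b hb hab => A.adj_sub ?_, ?_⟩
  · refine (e.map_adj_iff (v := ⟨a, hmem ha⟩) (w := ⟨b, hmem hb⟩)).mp ?_
    exact (SimpleGraph.top_adj _ _).mpr (e.injective.ne fun h => hab (congrArg Subtype.val h))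
  · rw [← Nat.card_eq_finsetCard]
    change Nat.card (↑T : Set V) = s
    rw [hT, Nat.card_congr e.toEquiv, Nat.card_eq_fintype_card, Fintype.card_fin]

lemma exists_isNClique_family [Fintype V] [DecidableEq V] {s : ℕ} {F : Finset G.Subgraph}
    (hF : ∀ A ∈ F, Nonempty (A.coe ≃g (⊤ : SimpleGraph (Fin s)))) :
    ∃ 𝒯 : Finset (Finset V), (∀ T ∈ 𝒯, G.IsNClique s T) ∧ 𝒯.card ≤ F.card ∧
      cutVerts F = ↑(𝒯.biUnion id) := by
  classical
  refine ⟨F.image fun A => A.verts.toFinset, ?_, Finset.card_image_le, ?_⟩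
  · simp only [Finset.mem_image, forall_exists_index, and_imp, forall_apply_eq_imp_iff₂]
    exact fun A hA => Subgraph.isNClique_of_iso_top (hF A hA).some (Set.coe_toFinset _)
  · ext v
    simp [cutVerts]

lemma IsNClique.nonempty_induce_iso_top {s : ℕ} {T : Finset V} (hT : G.IsNClique s T) :
    Nonempty (((⊤ : G.Subgraph).induce ↑T).coe ≃g (⊤ : SimpleGraph (Fin s))) := by
  rw [← induce_eq_coe_induce_top, induce_eq_top.mpr hT.isClique]
  exact ⟨Iso.completeGraph (T.equivFin.trans (finCongr hT.card_eq))⟩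

lemma exists_isStructureCut_top [Fintype V] {s : ℕ}
    (h : ∀ v, ∃ T : Finset V, G.IsNClique s T ∧ v ∈ T) :
    ∃ F : Finset G.Subgraph, G.IsStructureCut (⊤ : SimpleGraph (Fin s)) F := by
  classical
  choose T hT hvT using h
  refine ⟨Finset.univ.image fun v => (⊤ : G.Subgraph).induce ↑(T v), Or.inr ?_, ?_⟩
  · intro v hv
    exact absurd (Set.mem_iUnion₂.mpr ⟨_, Finset.mem_image_of_mem _ (Finset.mem_univ v), hvT v⟩) hv
  · simp only [Finset.mem_image, Finset.mem_univ, true_and, forall_exists_index,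
      forall_apply_eq_imp_iff]
    exact fun v => (hT v).nonempty_induce_iso_top

lemma not_isSubgraphCut {F : Finset G.Subgraph} (hF : (G.induce (cutVerts F)ᶜ).Preconnected)
    {a b : V} (ha : a ∉ cutVerts F) (hb : b ∉ cutVerts F) (hab : a ≠ b) : ¬ G.IsSubgraphCut F := by
  rintro (hdisc | hsub)
  · have : Nonempty ↥(cutVerts F)ᶜ := ⟨⟨a, ha⟩⟩
    exact hdisc ⟨hF⟩
  · exact hab (hsub ha hb)

end SimpleGraph

lemma Fin.val_succAbove {k : ℕ} (p : Fin (k + 1)) (i : Fin k) :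
    (p.succAbove i : ℕ) = if (i : ℕ) < p then (i : ℕ) else i + 1 := by
  unfold Fin.succAbove
  split_ifs <;> simp_all [Fin.lt_def]

namespace DCell

def codeEquiv (n : ℕ) : (m : ℕ) → DCellVertex n m ≃ Fin (tcell n m)
  | 0 => Equiv.refl (Fin n)
  | m + 1 => ((Equiv.refl _).prodCongr (codeEquiv n m)).trans
      (finProdFinEquiv.trans (finCongr (Nat.mul_comm _ _)))

variable {n m : ℕ}

lemma codeEquiv_val (x : DCellVertex n m) : (codeEquiv n m x : ℕ) = DCellCode n m x := by
  induction m with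
  | zero => rfl
  | succ m ih =>
    show (codeEquiv n m x.2 : ℕ) + tcell n m * x.1 = _
    rw [ih, DCellCode, Nat.mul_comm]

instance : Fintype (DCellVertex n m) := Fintype.ofEquiv _ (codeEquiv n m).symm

instance : DecidableEq (DCellVertex n m) := (codeEquiv n m).decidableEq

lemma card_vertex : Fintype.card (DCellVertex n m) = tcell n m := by
  simp [Fintype.card_congr (codeEquiv n m)]

lemma le_tcell (n m : ℕ) : n ≤ tcell n m := by
  induction m with
  | zero => rfl
  | succ m ih => exact ih.trans (Nat.le_mul_of_pos_right _ (Nat.succ_pos _))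

lemma mul_add_two_le_tcell_add {s : ℕ} (hs : 0 < s) (hsn : s < n) (m : ℕ) :
    s * ((n + s - 2) / s + m) + 2 ≤ tcell n m + s := by
  induction m with
  | zero =>
    have := Nat.div_mul_le_self (n + s - 2) s
    rw [Nat.add_zero, Nat.mul_comm]
    exact (Nat.add_le_add_right this 2).trans (by rw [tcell]; omega)
  | succ m ih =>
    have ht := hsn.trans_le (le_tcell n m)
    rw [tcell]
    nlinarith

/-- The cell of the unique neighbour of `u` outside the cell of `u`. -/
def crossCell (u : DCellVertex n (m + 1)) : Fin (tcell n m + 1) :=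
  u.1.succAbove (codeEquiv n m u.2)

lemma adj_succ_iff {u v : DCellVertex n (m + 1)} :
    (DCell n (m + 1)).Adj u v ↔ (u.1 = v.1 ∧ (DCell n m).Adj u.2 v.2) ∨
      (u.1 ≠ v.1 ∧ v.1 = crossCell u ∧ u.1 = crossCell v) := by
  have hu := (codeEquiv n m u.2).2
  have hv := (codeEquiv n m v.2).2
  simp only [DCell, SimpleGraph.fromRel_adj, crossCell, Fin.ext_iff, Fin.val_succAbove,
    ← codeEquiv_val] at hu hv ⊢
  constructor
  · rintro ⟨hne, (⟨h1, h2⟩ | h) | (⟨h1, h2⟩ | h)⟩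
    · exact Or.inl ⟨h1, h2⟩
    · right; split_ifs <;> omega
    · exact Or.inl ⟨h1.symm, h2.symm⟩
    · right; split_ifs <;> omega
  · rintro (⟨h1, h2⟩ | ⟨hne, h1, h2⟩)
    · refine ⟨?_, Or.inl (Or.inl ⟨h1, h2⟩)⟩
      rintro rfl
      exact (DCell n m).irrefl h2
    · refine ⟨?_, ?_⟩
      · rintro rfl
        exact hne rfl
      · split_ifs at h1 h2 <;> omega

lemma crossCell_ne (u : DCellVertex n (m + 1)) : crossCell u ≠ u.1 := Fin.succAbove_ne _ _

lemma crossCell_of_adj {u v : DCellVertex n (m + 1)} (h : (DCell n (m + 1)).Adj u v)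
    (hne : u.1 ≠ v.1) : v.1 = crossCell u ∧ u.1 = crossCell v := by
  rcases adj_succ_iff.mp h with ⟨heq, -⟩ | ⟨-, h⟩
  exacts [absurd heq hne, h]

lemma exists_adj_crossCell (u : DCellVertex n (m + 1)) :
    ∃ v, (DCell n (m + 1)).Adj u v ∧ v.1 = crossCell u := by
  obtain ⟨c, hc⟩ := Fin.exists_succAbove_eq (crossCell_ne u).symm
  refine ⟨(crossCell u, (codeEquiv n m).symm c),
    adj_succ_iff.mpr (Or.inr ⟨(crossCell_ne u).symm, rfl, ?_⟩), rfl⟩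
  show u.1 = (crossCell u).succAbove (codeEquiv n m ((codeEquiv n m).symm c))
  rw [Equiv.apply_symm_apply, hc]

lemma exists_crossCell_eq {i j : Fin (tcell n m + 1)} (h : i ≠ j) :
    ∃ u : DCellVertex n (m + 1), u.1 = i ∧ crossCell u = j := by
  obtain ⟨c, hc⟩ := Fin.exists_succAbove_eq h.symm
  exact ⟨(i, (codeEquiv n m).symm c), rfl, by simp [crossCell, hc]⟩

lemma eq_of_crossCell_eq {u w : DCellVertex n (m + 1)} (h1 : u.1 = w.1)
    (h2 : crossCell u = crossCell w) : u = w := by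
  rw [crossCell, crossCell, h1, Fin.succAbove_right_inj] at h2
  exact Prod.ext h1 ((codeEquiv n m).injective h2)

lemma eq_of_adj_of_adj {u w x : DCellVertex n (m + 1)} (hu : (DCell n (m + 1)).Adj u x)
    (hw : (DCell n (m + 1)).Adj w x) (h1 : u.1 = w.1) (hx : u.1 ≠ x.1) : u = w :=
  eq_of_crossCell_eq h1 <|
    (crossCell_of_adj hu hx).1.symm.trans (crossCell_of_adj hw (h1 ▸ hx)).1

lemma fst_eq_of_isNClique {s : ℕ} (hs : 3 ≤ s) {T : Finset (DCellVertex n (m + 1))}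
    (hT : (DCell n (m + 1)).IsNClique s T) {u v : DCellVertex n (m + 1)} (hu : u ∈ T)
    (hv : v ∈ T) : u.1 = v.1 := by
  by_contra huv
  have hne : u ≠ v := fun h => huv (h ▸ rfl)
  have hadj : ∀ {x y}, x ∈ T → y ∈ T → x ≠ y → (DCell n (m + 1)).Adj x y :=
    fun hx hy hxy => hT.isClique hx hy hxy
  obtain ⟨w, hw, hwv⟩ := Finset.exists_mem_ne (s := T.erase u)
    (by rw [Finset.card_erase_of_mem hu, hT.card_eq]; omega) v
  obtain ⟨hwu, hw⟩ := Finset.mem_erase.mp hw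
  by_cases hwu1 : w.1 = u.1
  · exact hwu (eq_of_adj_of_adj (hadj hw hv hwv) (hadj hu hv hne) hwu1 (hwu1 ▸ huv))
  · have hvw : v.1 = w.1 := (crossCell_of_adj (hadj hu hv hne) huv).1.trans
      (crossCell_of_adj (hadj hu hw (Ne.symm hwu)) (Ne.symm hwu1)).1.symm
    exact hwv (eq_of_adj_of_adj (hadj hv hu hne.symm) (hadj hw hu hwu) hvw (Ne.symm huv)).symm

def cellEmbedding (i : Fin (tcell n m + 1)) : DCell n m ↪g DCell n (m + 1) where
  toFun a := (i, a)
  inj' := Prod.mk_right_injective i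
  map_rel_iff' := adj_succ_iff.trans
    ⟨by rintro (⟨-, h⟩ | ⟨h, -⟩); exacts [h, absurd rfl h], fun h => Or.inl ⟨rfl, h⟩⟩

lemma exists_isNClique_mem {s : ℕ} (hs : 0 < s) (hsn : s ≤ n) :
    ∀ (m : ℕ) (v : DCellVertex n m), ∃ T, (DCell n m).IsNClique s T ∧ v ∈ T
  | 0, v => by
    obtain ⟨T, hvT, -, hT⟩ := Finset.exists_subsuperset_card_eq (n := s) (Finset.subset_univ {v})
      (by rw [Finset.card_singleton]; exact hs) (by rw [Finset.card_univ, card_vertex]; exact hsn)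
    exact ⟨T, ⟨fun _ _ _ _ hab => hab, hT⟩, hvT (Finset.mem_singleton_self v)⟩
  | m + 1, v => by
    obtain ⟨T, hT, hvT⟩ := exists_isNClique_mem hs hsn m v.2
    refine ⟨T.map (cellEmbedding v.1).toEmbedding, hT.map.mono ?_, Finset.mem_map_of_mem _ hvT⟩
    exact (SimpleGraph.map_le_iff_le_comap _ _ _).mpr fun _ _ => (cellEmbedding v.1).map_adj_iff.mpr

section CellFamily

variable (𝒯 : Finset (Finset (DCellVertex n (m + 1)))) (i : Fin (tcell n m + 1))

def cellCliques : Finset (Finset (DCellVertex n (m + 1))) :=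
  𝒯.filter fun T => ∀ u ∈ T, u.1 = i

noncomputable def cellFamily : Finset (Finset (DCellVertex n m)) :=
  (cellCliques 𝒯 i).image fun T =>
    T.preimage (cellEmbedding i) (cellEmbedding i).injective.injOn

variable {𝒯 i}

lemma cellCliques_subset : cellCliques 𝒯 i ⊆ 𝒯 := Finset.filter_subset _ _

lemma card_cellFamily_le : (cellFamily 𝒯 i).card ≤ (cellCliques 𝒯 i).card :=
  Finset.card_image_le

lemma mem_biUnion_cellFamily (hloc : ∀ T ∈ 𝒯, ∀ u ∈ T, ∀ v ∈ T, u.1 = v.1)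
    {a : DCellVertex n m} :
    a ∈ (cellFamily 𝒯 i).biUnion id ↔ cellEmbedding i a ∈ 𝒯.biUnion id := by
  simp only [Finset.mem_biUnion, cellFamily, cellCliques, Finset.mem_image, Finset.mem_filter,
    id]
  constructor
  · rintro ⟨-, ⟨T, ⟨hT, -⟩, rfl⟩, ha⟩
    exact ⟨T, hT, Finset.mem_preimage.mp ha⟩
  · rintro ⟨T, hT, ha⟩
    exact ⟨_, ⟨T, ⟨hT, fun u hu => hloc T hT u hu _ ha⟩, rfl⟩, Finset.mem_preimage.mpr ha⟩

lemma isNClique_of_mem_cellFamily {s : ℕ} (h𝒯 : ∀ T ∈ 𝒯, (DCell n (m + 1)).IsNClique s T)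
    {T' : Finset (DCellVertex n m)} (hT' : T' ∈ cellFamily 𝒯 i) :
    (DCell n m).IsNClique s T' := by
  obtain ⟨T, hT, rfl⟩ := Finset.mem_image.mp hT'
  obtain ⟨hT𝒯, hTi⟩ := Finset.mem_filter.mp hT
  have hmap : (T.preimage (cellEmbedding i) (cellEmbedding i).injective.injOn).map
      (cellEmbedding i).toEmbedding = T := by
    ext u
    simp only [Finset.mem_map, Finset.mem_preimage]
    refine ⟨by rintro ⟨a, ha, rfl⟩; exact ha, fun hu => ?_⟩
    have hu' : cellEmbedding i u.2 = u := Prod.ext (hTi u hu).symm rfl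
    exact ⟨u.2, hu'.symm ▸ hu, hu'⟩
  refine ⟨fun a ha b hb hab => ?_, ?_⟩
  · exact (cellEmbedding i).map_adj_iff.mp <| (h𝒯 T hT𝒯).isClique (Finset.mem_preimage.mp ha)
      (Finset.mem_preimage.mp hb) ((cellEmbedding i).injective.ne hab)
  · rw [← Finset.card_map, hmap, (h𝒯 T hT𝒯).card_eq]

end CellFamily

variable {𝒯 : Finset (Finset (DCellVertex n (m + 1)))}

lemma reachable_of_fst_eq (hloc : ∀ T ∈ 𝒯, ∀ u ∈ T, ∀ v ∈ T, u.1 = v.1)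
    (u v : ((↑(𝒯.biUnion id) : Set (DCellVertex n (m + 1)))ᶜ : Set _)) (huv : u.1.1 = v.1.1)
    (hpre : ((DCell n m).induce (↑((cellFamily 𝒯 u.1.1).biUnion id))ᶜ).Preconnected) :
    ((DCell n (m + 1)).induce (↑(𝒯.biUnion id))ᶜ).Reachable u v := by
  obtain ⟨⟨i, a⟩, ha⟩ := u
  obtain ⟨⟨j, b⟩, hb⟩ := v
  obtain rfl : i = j := huv
  have hmaps : Set.MapsTo (cellEmbedding i) (↑((cellFamily 𝒯 i).biUnion id))ᶜ
      (↑(𝒯.biUnion id))ᶜ := fun _ hc => mt (mem_biUnion_cellFamily hloc).mpr hc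
  exact (hpre ⟨a, mt (mem_biUnion_cellFamily hloc).mp ha⟩
    ⟨b, mt (mem_biUnion_cellFamily hloc).mp hb⟩).map (induceHom (cellEmbedding i).toHom hmaps)

/-- Distinct cells are joined by exactly one edge and each vertex lies on only one such edge,
so each deleted vertex destroys at most one of the `|S| |Sᶜ| ≥ 2 (t - 1)` edges between `S`
and `Sᶜ`. -/
lemma exists_adj_of_card_lt {X : Finset (DCellVertex n (m + 1))}
    {S : Finset (Fin (tcell n m + 1))} (hS : 2 ≤ S.card) (hSc : 2 ≤ Sᶜ.card)
    (hX : X.card + 2 < 2 * tcell n m) :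
    ∃ u ∉ X, ∃ v ∉ X, u.1 ∈ S ∧ v.1 ∉ S ∧ (DCell n (m + 1)).Adj u v := by
  by_contra! h
  let g : DCellVertex n (m + 1) → Fin (tcell n m + 1) × Fin (tcell n m + 1) :=
    fun w => if w.1 ∈ S then (w.1, crossCell w) else (crossCell w, w.1)
  have hsub : S ×ˢ Sᶜ ⊆ X.image g := by
    rintro ⟨a, b⟩ hab
    obtain ⟨ha, hb⟩ := Finset.mem_product.mp hab
    rw [Finset.mem_compl] at hb
    obtain ⟨u, rfl, rfl⟩ := exists_crossCell_eq (m := m) (ne_of_mem_of_not_mem ha hb)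
    obtain ⟨v, huv, hv⟩ := exists_adj_crossCell u
    have hvu := (crossCell_of_adj huv (hv ▸ (crossCell_ne u).symm)).2
    refine Finset.mem_image.mpr ?_
    by_cases hu : u ∈ X
    · exact ⟨u, hu, by simp [g, ha]⟩
    · refine ⟨v, by_contra fun hvX => h u hu v hvX ha (hv ▸ hb) huv, ?_⟩
      simp [g, hv, hb, hvu]
  have hcard : S.card + Sᶜ.card = tcell n m + 1 := by
    rw [Finset.card_add_card_compl, Fintype.card_fin]
  have := (Finset.card_le_card hsub).trans Finset.card_image_le
  rw [Finset.card_product] at this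
  nlinarith

/-- If every survivor of cell `c` had lost its outside neighbour, these neighbours would lie in
distinct members of `𝒯` outside `c`. -/
lemma exists_adj_of_cell {s : ℕ} (hs : 3 ≤ s) (h𝒯 : ∀ T ∈ 𝒯, (DCell n (m + 1)).IsNClique s T)
    (c : Fin (tcell n m + 1))
    (hcount : s * (cellCliques 𝒯 c).card + 𝒯.card < tcell n m + (cellCliques 𝒯 c).card) :
    ∃ u ∉ 𝒯.biUnion id, ∃ v ∉ 𝒯.biUnion id, u.1 = c ∧ v.1 ≠ c ∧ (DCell n (m + 1)).Adj u v := by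
  by_contra! h
  have hloc : ∀ T ∈ 𝒯, ∀ u ∈ T, ∀ v ∈ T, u.1 = v.1 := fun T hT _ hu _ hv =>
    fst_eq_of_isNClique hs (h𝒯 T hT) hu hv
  set A := Finset.univ.filter fun a => cellEmbedding c a ∉ 𝒯.biUnion id
  have hA : A.card ≤ (𝒯 \ cellCliques 𝒯 c).card := by
    refine Finset.card_le_card_of_forall_subsingleton
      (fun a T => ∃ v ∈ T, (DCell n (m + 1)).Adj (cellEmbedding c a) v ∧ v.1 ≠ c) ?_ ?_
    · intro a ha
      obtain ⟨v, hadj, hv⟩ := exists_adj_crossCell (cellEmbedding c a)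
      have hvc : v.1 ≠ c := hv ▸ crossCell_ne _
      obtain ⟨T, hT, hvT⟩ := Finset.mem_biUnion.mp <|
        by_contra fun hvX => h _ (Finset.mem_filter.mp ha).2 v hvX rfl hvc hadj
      exact ⟨T, Finset.mem_sdiff.mpr ⟨hT, fun hTc => hvc ((Finset.mem_filter.mp hTc).2 v hvT)⟩,
        v, hvT, hadj, hvc⟩
    · rintro T hT a ⟨-, v, hvT, hav, hvc⟩ a' ⟨-, v', hv'T, hav', hv'c⟩
      refine (cellEmbedding c).injective (eq_of_crossCell_eq rfl ?_)
      rw [← (crossCell_of_adj hav (Ne.symm hvc)).1, ← (crossCell_of_adj hav' (Ne.symm hv'c)).1]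
      exact hloc T (Finset.mem_sdiff.mp hT).1 v hvT v' hv'T
  have hAc : Aᶜ = (cellFamily 𝒯 c).biUnion id := by
    ext a
    simp [A, mem_biUnion_cellFamily hloc]
  have hdead : ((cellFamily 𝒯 c).biUnion id).card ≤ (cellCliques 𝒯 c).card * s :=
    (Finset.card_biUnion_le_card_mul _ _ s fun T' hT' =>
      (isNClique_of_mem_cellFamily h𝒯 hT').card_eq.le).trans
      (Nat.mul_le_mul_right s card_cellFamily_le)
  have htot : A.card + Aᶜ.card = tcell n m := by rw [Finset.card_add_card_compl, card_vertex]
  rw [Finset.card_sdiff_of_subset cellCliques_subset] at hA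
  have hsub : (cellCliques 𝒯 c).card ≤ 𝒯.card := Finset.card_le_card cellCliques_subset
  rw [hAc] at htot
  rw [Nat.mul_comm] at hdead
  omega

lemma preconnected_of_forall_fst_ne_mem {W : Set (DCellVertex n (m + 1))}
    {i₀ : Fin (tcell n m + 1)} (hW : ∀ u : DCellVertex n (m + 1), u.1 ≠ i₀ → u ∈ W)
    (hcell : ∀ u v : W, u.1.1 = v.1.1 → u.1.1 ≠ i₀ → ((DCell n (m + 1)).induce W).Reachable u v) :
    ((DCell n (m + 1)).induce W).Preconnected := by
  have hexit : ∀ z : W, ∃ z' : W, z'.1.1 ≠ i₀ ∧ ((DCell n (m + 1)).induce W).Reachable z z' := by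
    intro z
    by_cases hz : z.1.1 = i₀
    · obtain ⟨v, hadj, hv⟩ := exists_adj_crossCell z.1
      have hvi : v.1 ≠ i₀ := hv ▸ hz ▸ crossCell_ne z.1
      exact ⟨⟨v, hW v hvi⟩, hvi, SimpleGraph.Adj.reachable hadj⟩
    · exact ⟨z, hz, .rfl⟩
  have hmid : ∀ z z' : W, z.1.1 ≠ i₀ → z'.1.1 ≠ i₀ →
      ((DCell n (m + 1)).induce W).Reachable z z' := by
    intro z z' hz hz'
    by_cases h : z.1.1 = z'.1.1
    · exact hcell z z' h hz
    obtain ⟨u, hu, hcu⟩ := exists_crossCell_eq h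
    obtain ⟨v, huv, hv⟩ := exists_adj_crossCell u
    have hvi : v.1 ≠ i₀ := hv ▸ hcu ▸ hz'
    let u' : W := ⟨u, hW u (hu ▸ hz)⟩
    let v' : W := ⟨v, hW v hvi⟩
    have huv' : ((DCell n (m + 1)).induce W).Adj u' v' := huv
    exact (hcell z u' hu.symm hz).trans (huv'.reachable.trans (hcell v' z' (hv.trans hcu) hvi))
  intro x y
  obtain ⟨x', hx', hxx'⟩ := hexit x
  obtain ⟨y', hy', hyy'⟩ := hexit y
  exact hxx'.trans ((hmid x' y' hx' hy').trans hyy'.symm)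

lemma preconnected_of_card_cellCliques_lt {s K : ℕ} (hs : 3 ≤ s)
    (h𝒯 : ∀ T ∈ 𝒯, (DCell n (m + 1)).IsNClique s T) (hcard : 𝒯.card ≤ K)
    (hK : s * K + 2 ≤ tcell n m + s) (hst : s < tcell n m)
    (hsmall : ∀ i, (cellCliques 𝒯 i).card < K)
    (hcell : ∀ u v : ((↑(𝒯.biUnion id) : Set (DCellVertex n (m + 1)))ᶜ : Set _), u.1.1 = v.1.1 →
      ((DCell n (m + 1)).induce (↑(𝒯.biUnion id))ᶜ).Reachable u v) :
    ((DCell n (m + 1)).induce (↑(𝒯.biUnion id))ᶜ).Preconnected := by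
  classical
  refine SimpleGraph.preconnected_induce_of_cells (fun u => u.1) hcell ?_
  rintro S ⟨x, hx⟩ ⟨y, hy⟩
  have hcount : ∀ c, s * (cellCliques 𝒯 c).card + 𝒯.card < tcell n m + (cellCliques 𝒯 c).card :=
    fun c => by nlinarith [hsmall c]
  by_cases hS : ∀ i ∈ S, i = x.1.1
  · obtain ⟨u, hu, v, hv, hu1, hvc, huv⟩ := exists_adj_of_cell hs h𝒯 x.1.1 (hcount _)
    exact ⟨⟨u, hu⟩, ⟨v, hv⟩, hu1 ▸ hx, fun hvS => hvc (hS _ hvS), huv⟩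
  by_cases hSc : ∀ i ∉ S, i = y.1.1
  · obtain ⟨u, hu, v, hv, hu1, hvc, huv⟩ := exists_adj_of_cell hs h𝒯 y.1.1 (hcount _)
    exact ⟨⟨v, hv⟩, ⟨u, hu⟩, by_contra fun h => hvc (hSc _ h), hu1 ▸ hy, huv.symm⟩
  push Not at hS hSc
  obtain ⟨i, hiS, hix⟩ := hS
  obtain ⟨j, hjS, hjy⟩ := hSc
  have hX : (𝒯.biUnion id).card ≤ 𝒯.card * s := Finset.card_biUnion_le_card_mul _ _ s
    fun T hT => (h𝒯 T hT).card_eq.le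
  obtain ⟨u, hu, v, hv, huS, hvS, huv⟩ := exists_adj_of_card_lt (X := 𝒯.biUnion id)
    (S := S.toFinset)
    (Finset.one_lt_card.mpr ⟨_, Set.mem_toFinset.mpr hx, i, Set.mem_toFinset.mpr hiS, hix.symm⟩)
    (Finset.one_lt_card.mpr ⟨_, by simpa using hy, j, by simpa using hjS, hjy.symm⟩)
    (by nlinarith)
  exact ⟨⟨u, hu⟩, ⟨v, hv⟩, Set.mem_toFinset.mp huS, by simpa using hvS, huv⟩

lemma preconnected_succ {s K : ℕ} (hs : 3 ≤ s) (hK : s * K + 2 ≤ tcell n m + s)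
    (hst : s < tcell n m) (hK0 : 0 < K)
    (ih : ∀ 𝒯' : Finset (Finset (DCellVertex n m)), (∀ T ∈ 𝒯', (DCell n m).IsNClique s T) →
      𝒯'.card < K → ((DCell n m).induce (↑(𝒯'.biUnion id))ᶜ).Preconnected)
    (h𝒯 : ∀ T ∈ 𝒯, (DCell n (m + 1)).IsNClique s T) (hcard : 𝒯.card ≤ K) :
    ((DCell n (m + 1)).induce (↑(𝒯.biUnion id))ᶜ).Preconnected := by
  have hloc : ∀ T ∈ 𝒯, ∀ u ∈ T, ∀ v ∈ T, u.1 = v.1 := fun T hT _ hu _ hv =>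
    fst_eq_of_isNClique hs (h𝒯 T hT) hu hv
  have hreach : ∀ u v : ((↑(𝒯.biUnion id) : Set (DCellVertex n (m + 1)))ᶜ : Set _),
      u.1.1 = v.1.1 → (cellCliques 𝒯 u.1.1).card < K →
      ((DCell n (m + 1)).induce (↑(𝒯.biUnion id))ᶜ).Reachable u v := fun u v huv hu =>
    reachable_of_fst_eq hloc u v huv <| ih _ (fun _ => isNClique_of_mem_cellFamily h𝒯)
      (card_cellFamily_le.trans_lt hu)
  by_cases hone : ∃ i₀, ∀ T ∈ 𝒯, ∀ u ∈ T, u.1 = i₀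
  · obtain ⟨i₀, hi₀⟩ := hone
    refine preconnected_of_forall_fst_ne_mem (i₀ := i₀) (fun u hu huX => ?_)
      (fun u v huv hu => hreach u v huv ?_)
    · obtain ⟨T, hT, huT⟩ := Finset.mem_biUnion.mp huX
      exact hu (hi₀ T hT u huT)
    · suffices cellCliques 𝒯 u.1.1 = ∅ by rwa [this, Finset.card_empty]
      refine Finset.filter_eq_empty_iff.mpr fun T hT hTu => ?_
      obtain ⟨w, hw⟩ := Finset.card_pos.mp (by rw [(h𝒯 T hT).card_eq]; omega)
      exact hu ((hTu w hw).symm.trans (hi₀ T hT w hw))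
  · push Not at hone
    have hsmall : ∀ i, (cellCliques 𝒯 i).card < K := fun i => by
      obtain ⟨T, hT, u, hu, hui⟩ := hone i
      have hTi : T ∉ cellCliques 𝒯 i := fun h => hui ((Finset.mem_filter.mp h).2 u hu)
      exact (Finset.card_lt_card ⟨cellCliques_subset, fun h => hTi (h hT)⟩).trans_le hcard
    exact preconnected_of_card_cellCliques_lt hs h𝒯 hcard hK hst hsmall
      fun u v huv => hreach u v huv (hsmall _)

theorem preconnected_induce_compl {s : ℕ} (hs : 3 ≤ s) (hsn : s < n) :
    ∀ (m : ℕ) (𝒯 : Finset (Finset (DCellVertex n m))), (∀ T ∈ 𝒯, (DCell n m).IsNClique s T) →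
      𝒯.card < (n + s - 2) / s + m → ((DCell n m).induce (↑(𝒯.biUnion id))ᶜ).Preconnected
  | 0, _, _, _ => fun x y => by
    by_cases h : x = y
    · rw [h]
    · exact SimpleGraph.Adj.reachable fun h' => h (Subtype.ext h')
  | m + 1, _, h𝒯, hcard =>
    preconnected_succ hs (mul_add_two_le_tcell_add (by omega) hsn m)
      (hsn.trans_le (le_tcell n m)) (Nat.add_pos_left (Nat.div_pos (by omega) (by omega)) m)
      (preconnected_induce_compl hs hsn m) h𝒯 (by omega)

lemma two_le_card_compl {s : ℕ} (hs : 0 < s) (hsn : s < n)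
    {𝒯 : Finset (Finset (DCellVertex n m))} (h𝒯 : ∀ T ∈ 𝒯, (DCell n m).IsNClique s T)
    (hcard : 𝒯.card < (n + s - 2) / s + m) : 2 ≤ (𝒯.biUnion id)ᶜ.card := by
  have hX : (𝒯.biUnion id).card ≤ 𝒯.card * s := Finset.card_biUnion_le_card_mul _ _ s
    fun T hT => (h𝒯 T hT).card_eq.le
  have hK := mul_add_two_le_tcell_add hs hsn m
  have hle := Nat.mul_le_mul_left s hcard
  rw [Nat.mul_add_one, Nat.mul_comm] at hle
  rw [Finset.card_compl, card_vertex]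
  omega

end DCell

theorem dcell_complete_structConn_lower_general (m n s : ℕ) (hs1 : 3 ≤ s)
    (hs2 : s ≤ n - 1) :
    (n + s - 2) / s + m ≤ (DCell n m).structConn (⊤ : SimpleGraph (Fin s)) := by
  have hsn : s < n := by omega
  refine le_csInf ?_ ?_
  · obtain ⟨F, hF⟩ :=
      SimpleGraph.exists_isStructureCut_top (DCell.exists_isNClique_mem (by omega) hsn.le m)
    exact ⟨F.card, F, hF, rfl⟩
  rintro k ⟨F, ⟨hcut, hF⟩, rfl⟩
  by_contra! hlt
  obtain ⟨𝒯, h𝒯, hcard, hverts⟩ := SimpleGraph.exists_isNClique_family hF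
  replace hcard := hcard.trans_lt hlt
  obtain ⟨a, ha, b, hb, hab⟩ :=
    Finset.one_lt_card.mp (DCell.two_le_card_compl (by omega) hsn h𝒯 hcard)
  have hnot := SimpleGraph.not_isSubgraphCut (F := F) (a := a) (b := b)
  rw [hverts] at hnot
  exact hnot (DCell.preconnected_induce_compl hs1 hsn m 𝒯 h𝒯 hcard) (by simpa using ha)
    (by simpa using hb) hab hcut

/-- For all integers `m ≥ 0`, `n ≥ 2` and `3 ≤ s ≤ n - 1`,
`κ(D_{m,n}; K_s) ≥ ⌈(n-1)/s⌉ + m`. -/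
theorem dcell_complete_structConn_lower (m n s : ℕ) (hn : 2 ≤ n) (hs1 : 3 ≤ s)
    (hs2 : s ≤ n - 1) :
    (n + s - 2) / s + m ≤ (DCell n m).structConn (⊤ : SimpleGraph (Fin s)) :=
  dcell_complete_structConn_lower_general m n s hs1 hs2
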